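/- Let n ≥ 1, let G be a connected simple graph on the vertex set {1,…,n}, and let L be its Laplacian matrix, i.e., L_{ii} = deg(i), L_{ij} = −1 if {i,j} is an edge of G, and L_{ij} = 0 otherwise (i ≠ j). Then every L-invariant anti-synchrony subspace Δ_𝒫 ⊆ ℝ^n is evenly tagged. -/

import Mathlib

/-- A tagged partition of `{1,…,n}` (modeled as `Fin n`): a partition into nonempty
classes together with a partial involution on the classes having at most one fixed point.
The partial involution is encoded by `star`, with `star P = none` meaning `*` is
undefined at `P` (in particular `star P = none` for any `P` that is not a class). -/
structure TaggedPartition (n : ℕ) where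
  classes : Set (Set (Fin n))
  classes_nonempty : ∀ P ∈ classes, P.Nonempty
  cover : ∀ i : Fin n, ∃ P ∈ classes, i ∈ P
  eq_of_inter : ∀ P ∈ classes, ∀ Q ∈ classes, (P ∩ Q).Nonempty → P = Q
  star : Set (Fin n) → Option (Set (Fin n))
  star_dom : ∀ P, star P ≠ none → P ∈ classes
  star_ran : ∀ P Q, star P = some Q → Q ∈ classes
  star_invol : ∀ P Q, star P = some Q → star Q = some P
  star_fixed : ∀ P Q, star P = some P → star Q = some Q → P = Q

/-- The polydiagonal subspace `Δ_tp ⊆ ℝⁿ` of a tagged partition: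
`x_i = x_j` whenever `[i] = [j]`, and `x_i = -x_j` whenever `[i]* = [j]`. -/
def TaggedPartition.polydiag {n : ℕ} (tp : TaggedPartition n) : Set (Fin n → ℝ) :=
  {x | (∀ P ∈ tp.classes, ∀ i ∈ P, ∀ j ∈ P, x i = x j) ∧
       (∀ P Q, tp.star P = some Q → ∀ i ∈ P, ∀ j ∈ Q, x i = - x j)}

/-- `Δ_tp` is a synchrony subspace: the partial involution is the empty function. -/
def TaggedPartition.IsSynchrony {n : ℕ} (tp : TaggedPartition n) : Prop :=
  ∀ P, tp.star P = none

/-- Fully tagged: the partial involution is defined on every class. -/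
def TaggedPartition.FullyTagged {n : ℕ} (tp : TaggedPartition n) : Prop :=
  ∀ P ∈ tp.classes, tp.star P ≠ none

/-- Evenly tagged: fully tagged and `#P = #P*` for every class `P`. -/
def TaggedPartition.EvenlyTagged {n : ℕ} (tp : TaggedPartition n) : Prop :=
  tp.FullyTagged ∧ ∀ P Q, tp.star P = some Q → P.ncard = Q.ncard

/-!
The Laplacian `L` is symmetric, and since `G` is connected its kernel consists of the constant
vectors. An anti-synchrony subspace `Δ` contains no nonzero constant vector, so `L` is injective
on the invariant subspace `Δ`, hence maps `Δ` onto itself; thus `Δ ⊆ range L = (ker L)ᗮ`,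
i.e. every vector of `Δ` has coordinate sum zero. Testing this on the indicator of an untagged
class, and on `1_P - 1_{P*}`, shows that the tagging is full and even.
-/

open Matrix

theorem Submodule.le_range_of_invariant_of_disjoint_ker {K V : Type*} [Field K]
    [AddCommGroup V] [Module K V] [FiniteDimensional K V] {f : V →ₗ[K] V} {S : Submodule K V}
    (hS : ∀ x ∈ S, f x ∈ S) (hker : Disjoint S (LinearMap.ker f)) :
    S ≤ LinearMap.range f := by
  have hinj : Function.Injective (f.restrict hS) := by
    rw [← LinearMap.ker_eq_bot, LinearMap.ker_restrict]
    exact disjoint_iff_comap_eq_bot.mp hker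
  intro x hx
  obtain ⟨y, hy⟩ := LinearMap.injective_iff_surjective.1 hinj ⟨x, hx⟩
  exact ⟨y, congrArg Subtype.val hy⟩

theorem Matrix.IsSymm.mulVec_dotProduct_eq_zero {m R : Type*} [Fintype m] [CommSemiring R]
    {A : Matrix m m R} (hA : A.IsSymm) {v : m → R} (hv : A *ᵥ v = 0) (y : m → R) :
    (A *ᵥ y) ⬝ᵥ v = 0 := by
  rw [dotProduct_comm, dotProduct_mulVec, ← hA.eq, vecMul_transpose, hv, zero_dotProduct]

theorem Matrix.IsSymm.dotProduct_eq_zero_of_invariant {m K : Type*} [Fintype m]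
    [DecidableEq m] [Field K] {A : Matrix m m K} (hA : A.IsSymm) {S : Submodule K (m → K)}
    (hS : ∀ x ∈ S, A *ᵥ x ∈ S) (hker : Disjoint S (LinearMap.ker A.mulVecLin))
    {x v : m → K} (hx : x ∈ S) (hv : A *ᵥ v = 0) : x ⬝ᵥ v = 0 := by
  obtain ⟨y, rfl⟩ := Submodule.le_range_of_invariant_of_disjoint_ker hS hker hx
  exact hA.mulVec_dotProduct_eq_zero hv y

theorem SimpleGraph.eq_lapMatrix_of_apply_eq {V R : Type*} [Fintype V] [DecidableEq V]
    [AddGroupWithOne R] (G : SimpleGraph V) [DecidableRel G.Adj] (L : Matrix V V R)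
    (hL : ∀ i j, L i j = if i = j then (G.degree i : R) else if G.Adj i j then -1 else 0) :
    L = G.lapMatrix R := by
  ext i j
  rw [hL]
  by_cases h : i = j
  · subst h
    simp [lapMatrix, degMatrix]
  · by_cases hadj : G.Adj i j <;> simp [lapMatrix, degMatrix, h, hadj]

theorem Set.sum_indicator_one_eq_ncard {ι R : Type*} [Fintype ι] [AddCommMonoidWithOne R]
    (P : Set ι) : ∑ i, P.indicator (1 : ι → R) i = P.ncard := by
  classical
  rw [Finset.sum_indicator_eq_sum_filter]
  simp [Set.ncard_eq_toFinset_card']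

namespace TaggedPartition

variable {n : ℕ} (tp : TaggedPartition n)

def polydiagSubmodule : Submodule ℝ (Fin n → ℝ) where
  carrier := tp.polydiag
  add_mem' {x y} hx hy :=
    ⟨fun P hP i hi j hj => by simp [hx.1 P hP i hi j hj, hy.1 P hP i hi j hj],
     fun P Q h i hi j hj => by simp [hx.2 P Q h i hi j hj, hy.2 P Q h i hi j hj]; ring⟩
  zero_mem' := ⟨fun _ _ _ _ _ _ => rfl, fun _ _ _ _ _ _ _ => neg_zero.symm⟩
  smul_mem' c x hx :=
    ⟨fun P hP i hi j hj => by simp [hx.1 P hP i hi j hj],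
     fun P Q h i hi j hj => by simp [hx.2 P Q h i hi j hj]⟩

theorem eq_zero_of_mem_polydiag_of_const (hanti : ¬ tp.IsSynchrony) {x : Fin n → ℝ}
    (hx : x ∈ tp.polydiag) (hconst : ∀ i j, x i = x j) : x = 0 := by
  obtain ⟨P, hP⟩ := not_forall.1 hanti
  obtain ⟨Q, hPQ⟩ := Option.ne_none_iff_exists'.1 hP
  obtain ⟨i, hi⟩ := tp.classes_nonempty P (tp.star_dom P hP)
  obtain ⟨j, hj⟩ := tp.classes_nonempty Q (tp.star_ran P Q hPQ)
  have hxi : x i = 0 := by linarith [hx.2 P Q hPQ i hi j hj, hconst i j]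
  funext k
  rw [hconst k i, hxi, Pi.zero_apply]

theorem mem_class_iff {A P : Set (Fin n)} (hA : A ∈ tp.classes) (hP : P ∈ tp.classes)
    {i : Fin n} (hi : i ∈ A) : i ∈ P ↔ A = P :=
  ⟨fun h => tp.eq_of_inter A hA P hP ⟨i, hi, h⟩, fun h => h ▸ hi⟩

theorem indicator_apply_of_mem_class {A P : Set (Fin n)} (hA : A ∈ tp.classes)
    (hP : P ∈ tp.classes) {i : Fin n} (hi : i ∈ A) :
    P.indicator (1 : Fin n → ℝ) i = if A = P then 1 else 0 := by
  classical
  simp [Set.indicator_apply, tp.mem_class_iff hA hP hi]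

theorem star_eq_iff {P Q A B : Set (Fin n)} (hPQ : tp.star P = some Q)
    (hAB : tp.star A = some B) : A = P ↔ B = Q := by
  constructor
  · rintro rfl
    exact Option.some.inj (hAB.symm.trans hPQ)
  · rintro rfl
    exact Option.some.inj ((tp.star_invol A B hAB).symm.trans (tp.star_invol P B hPQ))

theorem mem_polydiag_of_forall_mem_class {x : Fin n → ℝ} (g : Set (Fin n) → ℝ)
    (hx : ∀ A ∈ tp.classes, ∀ i ∈ A, x i = g A)
    (hg : ∀ A B, tp.star A = some B → g A = -g B) : x ∈ tp.polydiag :=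
  ⟨fun A hA i hi j hj => by rw [hx A hA i hi, hx A hA j hj],
   fun A B h i hi j hj => by
    rw [hx A (tp.star_dom A (by simp [h])) i hi, hx B (tp.star_ran A B h) j hj, hg A B h]⟩

theorem fullyTagged_of_forall_sum_eq_zero (h : ∀ x ∈ tp.polydiag, ∑ i, x i = 0) :
    tp.FullyTagged := by
  intro R hR hRnone
  have hx : R.indicator 1 ∈ tp.polydiag := by
    refine tp.mem_polydiag_of_forall_mem_class (fun A => if A = R then 1 else 0)
      (fun A hA i hi => tp.indicator_apply_of_mem_class hA hR hi) fun A B hAB => ?_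
    have hA : A ≠ R := by rintro rfl; simp [hRnone] at hAB
    have hB : B ≠ R := fun hBR => by simpa [hBR, hRnone] using tp.star_invol A B hAB
    simp [hA, hB]
  have hR0 := h _ hx
  rw [Set.sum_indicator_one_eq_ncard, Nat.cast_eq_zero, Set.ncard_eq_zero] at hR0
  exact (tp.classes_nonempty R hR).ne_empty hR0

theorem ncard_eq_of_forall_sum_eq_zero (h : ∀ x ∈ tp.polydiag, ∑ i, x i = 0)
    {P Q : Set (Fin n)} (hPQ : tp.star P = some Q) : P.ncard = Q.ncard := by
  have hP := tp.star_dom P (by simp [hPQ])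
  have hQ := tp.star_ran P Q hPQ
  have hx : P.indicator 1 - Q.indicator 1 ∈ tp.polydiag := by
    refine tp.mem_polydiag_of_forall_mem_class
      (fun A => (if A = P then 1 else 0) - (if A = Q then 1 else 0))
      (fun A hA i hi => by
        rw [Pi.sub_apply, tp.indicator_apply_of_mem_class hA hP hi,
          tp.indicator_apply_of_mem_class hA hQ hi])
      fun A B hAB => ?_
    simp only [← tp.star_eq_iff hPQ hAB, ← tp.star_eq_iff (tp.star_invol P Q hPQ) hAB]
    ring
  have hPQ0 := h _ hx
  simp only [Pi.sub_apply, Finset.sum_sub_distrib, Set.sum_indicator_one_eq_ncard] at hPQ0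
  exact_mod_cast sub_eq_zero.1 hPQ0

theorem evenlyTagged_of_forall_sum_eq_zero (h : ∀ x ∈ tp.polydiag, ∑ i, x i = 0) :
    tp.EvenlyTagged :=
  ⟨tp.fullyTagged_of_forall_sum_eq_zero h, fun _ _ => tp.ncard_eq_of_forall_sum_eq_zero h⟩

end TaggedPartition

theorem graphLaplacian_antiSynchrony_evenlyTagged_general {n : ℕ}
    (G : SimpleGraph (Fin n)) [DecidableRel G.Adj] (hconn : G.Connected)
    (L : Matrix (Fin n) (Fin n) ℝ)
    (hL : ∀ i j, L i j =
      if i = j then (G.degree i : ℝ) else if G.Adj i j then -1 else 0)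
    (tp : TaggedPartition n)
    (hinv : ∀ x ∈ tp.polydiag, L.mulVec x ∈ tp.polydiag)
    (hanti : ¬ tp.IsSynchrony) :
    tp.EvenlyTagged := by
  obtain rfl := G.eq_lapMatrix_of_apply_eq L hL
  have hconst_of_ker {x : Fin n → ℝ} (hx : G.lapMatrix ℝ *ᵥ x = 0) (i j : Fin n) :
      x i = x j :=
    G.lapMatrix_mulVec_eq_zero_iff_forall_reachable.1 hx i j (hconn.preconnected i j)
  have hker : Disjoint tp.polydiagSubmodule (LinearMap.ker (G.lapMatrix ℝ).mulVecLin) :=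
    Submodule.disjoint_def.2 fun x hx hLx =>
      tp.eq_zero_of_mem_polydiag_of_const hanti hx (hconst_of_ker hLx)
  refine tp.evenlyTagged_of_forall_sum_eq_zero fun x hx => ?_
  rw [← dotProduct_one]
  exact (G.isSymm_lapMatrix ℝ).dotProduct_eq_zero_of_invariant hinv hker hx
    G.lapMatrix_mulVec_const_eq_zero

/-- Theorem 6.15, proving Conjecture 5.3 of [NSS6].
Let `L` be the Laplacian matrix of a connected simple graph on `n ≥ 1` vertices.
Then every `L`-invariant anti-synchrony subspace is evenly tagged. -/
theorem graphLaplacian_antiSynchrony_evenlyTagged {n : ℕ} (hn : 1 ≤ n)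
    (G : SimpleGraph (Fin n)) [DecidableRel G.Adj] (hconn : G.Connected)
    (L : Matrix (Fin n) (Fin n) ℝ)
    (hL : ∀ i j, L i j =
      if i = j then (G.degree i : ℝ) else if G.Adj i j then -1 else 0)
    (tp : TaggedPartition n)
    (hinv : ∀ x ∈ tp.polydiag, L.mulVec x ∈ tp.polydiag)
    (hanti : ¬ tp.IsSynchrony) :
    tp.EvenlyTagged :=
  graphLaplacian_antiSynchrony_evenlyTagged_general G hconn L hL tp hinv hanti
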